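/- arXiv:1703.04419 — 6 statements merged into one kernel-verified Lean document; each statement's English description precedes it below -/
import Mathlib

section
/- A continuous function f : ℝ → ℝ is convex if and only if for all real numbers a and b, the function x ↦ f(x) − (a x + b) changes sign at most twice as x traverses from −∞ to +∞, and if it changes sign exactly twice, the signs occur in the order '+, −, +'. Equivalently, f is convex if and only if for all a, b there do not exist x₁ < x₂ < x₃ with f(x₁) − (a x₁ + b) < 0, f(x₂) − (a x₂ + b) > 0, and f(x₃) − (a x₃ + b) < 0. -/
lemma aux_key (f : ℝ → ℝ)
    (h : ∀ a b : ℝ, ¬ ∃ x₁ x₂ x₃ : ℝ, x₁ < x₂ ∧ x₂ < x₃ ∧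
        f x₁ - (a * x₁ + b) < 0 ∧
        f x₂ - (a * x₂ + b) > 0 ∧
        f x₃ - (a * x₃ + b) < 0)
    (x y s t : ℝ) (hxy : x < y) (hs : 0 < s) (ht : 0 < t) (hst : s + t = 1) :
    f (s * x + t * y) ≤ s * f x + t * f y := by
  by_contra hcon
  push_neg at hcon
  set z := s * x + t * y with hzdef
  clear_value z
  have hz1 : x < z := by
    have e : z - x = t * (y - x) := by rw [hzdef]; linear_combination x * hst
    nlinarith [mul_pos ht (sub_pos.mpr hxy)]
  have hz2 : z < y := by
    have e : y - z = s * (y - x) := by rw [hzdef]; linear_combination (-y) * hst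
    nlinarith [mul_pos hs (sub_pos.mpr hxy)]
  set a := (f y - f x) / (y - x) with hadef
  set b := f x - a * x with hbdef
  have hyx : y - x ≠ 0 := by intro h'; linarith [sub_eq_zero.mp h']
  have hax : a * x + b = f x := by rw [hbdef]; ring
  have hay : a * y + b = f y := by
    rw [hbdef, hadef]; field_simp; ring
  clear_value a b
  have hlin : a * z + b = s * (a * x + b) + t * (a * y + b) := by
    rw [hzdef]; linear_combination (-b) * hst
  have hgz : 0 < f z - (a * z + b) := by
    rw [hlin, hax, hay]; linarith
  apply h a (b + (f z - (a * z + b)) / 2)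
  refine ⟨x, z, y, hz1, hz2, ?_, ?_, ?_⟩
  · linarith
  · linarith
  · linarith

/-- A continuous function is convex iff for all lines, the difference changes sign
at most twice, and in case of two sign changes in the order '+,−,+'. -/
theorem continuous_convex_iff_sign_change
    (f : ℝ → ℝ) (hf : Continuous f) :
    ConvexOn ℝ Set.univ f ↔
      ∀ a b : ℝ, ¬ ∃ x₁ x₂ x₃ : ℝ, x₁ < x₂ ∧ x₂ < x₃ ∧
        f x₁ - (a * x₁ + b) < 0 ∧
        f x₂ - (a * x₂ + b) > 0 ∧
        f x₃ - (a * x₃ + b) < 0 := by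
  constructor
  · rintro hc a b ⟨x₁, x₂, x₃, h12, h23, h1, h2, h3⟩
    have h13 : x₁ < x₃ := h12.trans h23
    have hd : (0:ℝ) < x₃ - x₁ := by linarith
    set t : ℝ := (x₃ - x₂) / (x₃ - x₁) with htdef
    set s : ℝ := (x₂ - x₁) / (x₃ - x₁) with hsdef
    have ht0 : 0 ≤ t := div_nonneg (by linarith) hd.le
    have hs0 : 0 ≤ s := div_nonneg (by linarith) hd.le
    have hts : t + s = 1 := by rw [htdef, hsdef]; field_simp; ring
    have hz : t • x₁ + s • x₃ = x₂ := by
      simp only [smul_eq_mul, htdef, hsdef]; field_simp; ring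
    have key := hc.2 (Set.mem_univ x₁) (Set.mem_univ x₃) ht0 hs0 hts
    rw [hz] at key
    simp only [smul_eq_mul] at key
    have hlin : a * x₂ + b = t * (a * x₁ + b) + s * (a * x₃ + b) := by
      rw [← hz]; simp only [smul_eq_mul]; linear_combination (-b) * hts
    have e1 : t * (f x₁ - (a * x₁ + b)) ≤ 0 := mul_nonpos_of_nonneg_of_nonpos ht0 h1.le
    have e3 : s * (f x₃ - (a * x₃ + b)) ≤ 0 := mul_nonpos_of_nonneg_of_nonpos hs0 h3.le
    nlinarith [key, hlin, e1, e3, h2]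
  · intro h
    refine ⟨convex_univ, ?_⟩
    intro x _ y _ s t hs ht hst
    simp only [smul_eq_mul]
    rcases eq_or_ne x y with rfl | hxy
    · have hx : s * x + t * x = x := by rw [← add_mul, hst, one_mul]
      rw [hx]
      have e : s * f x + t * f x = f x := by linear_combination (f x) * hst
      linarith
    · rcases hs.lt_or_eq with hs' | hs'
      · rcases ht.lt_or_eq with ht' | ht'
        · rcases hxy.lt_or_gt with h' | h'
          · exact aux_key f h x y s t h' hs' ht' hst
          · have := aux_key f h y x t s h' ht' hs' (by linarith)
            rw [add_comm (t * y)] at this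
            linarith
        · have hs1 : s = 1 := by linarith
          rw [← ht', hs1]; simp
      · have ht1 : t = 1 := by linarith
        rw [← hs', ht1]; simp
end

section
/- Let f : [0,∞) → ℝ be integrable and define g(x) = ∫_x^∞ f(t) dt. If f changes sign exactly in the order '+, −, +' on [0,∞) (i.e., there exist 0 ≤ c₁ ≤ c₂ such that f ≥ 0 on [0,c₁], f ≤ 0 on [c₁,c₂], and f ≥ 0 on [c₂,∞)), then the sign variation of g on [0,∞) is a final segment of '+, −, +': namely g's sign pattern is one of '+, −, +', '−, +', or '+'. -/
open MeasureTheory Set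

/-- If f has sign pattern '+,−,+' on [0,∞) then g(x) = ∫_x^∞ f has sign pattern
'+,−,+', '−,+', or '+'. -/
theorem sign_variation_of_tail_integral
    (f g : ℝ → ℝ)
    (hf : IntegrableOn f (Ici (0:ℝ)))
    (hg : ∀ x : ℝ, g x = ∫ t in Ioi x, f t)
    (hsign : ∃ c₁ c₂ : ℝ, 0 ≤ c₁ ∧ c₁ ≤ c₂ ∧
      (∀ t ∈ Icc 0 c₁, 0 ≤ f t) ∧
      (∀ t ∈ Icc c₁ c₂, f t ≤ 0) ∧
      (∀ t ∈ Ici c₂, 0 ≤ f t)) :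
    (∃ d₁ d₂ : ℝ, 0 ≤ d₁ ∧ d₁ ≤ d₂ ∧
      (∀ x ∈ Icc 0 d₁, 0 ≤ g x) ∧
      (∀ x ∈ Icc d₁ d₂, g x ≤ 0) ∧
      (∀ x ∈ Ici d₂, 0 ≤ g x)) ∨
    (∃ d : ℝ, 0 ≤ d ∧
      (∀ x ∈ Icc 0 d, g x ≤ 0) ∧
      (∀ x ∈ Ici d, 0 ≤ g x)) ∨
    (∀ x ∈ Ici (0:ℝ), 0 ≤ g x) := by
  obtain ⟨c₁, c₂, hc₁, hc₁₂, hpos₁, hneg, hpos₂⟩ := hsign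
  -- splitting lemma
  have hsplit : ∀ x y : ℝ, 0 ≤ x → x ≤ y → g x = (∫ t in Ioc x y, f t) + g y := by
    intro x y hx hxy
    rw [hg, hg]
    rw [← setIntegral_union (Ioc_disjoint_Ioi le_rfl) measurableSet_Ioi
      (hf.mono_set (fun t ht => le_of_lt (lt_of_le_of_lt hx ht.1)))
      (hf.mono_set (fun t ht => le_of_lt (lt_of_le_of_lt (hx.trans hxy) ht)))]
    rw [Ioc_union_Ioi_eq_Ioi hxy]
  -- g ≥ 0 on [c₂, ∞)
  have hg₂ : ∀ x ∈ Ici c₂, 0 ≤ g x := by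
    intro x hx
    rw [hg]
    exact setIntegral_nonneg measurableSet_Ioi
      (fun t ht => hpos₂ t (mem_Ici.mpr (le_of_lt (lt_of_le_of_lt (mem_Ici.mp hx) (mem_Ioi.mp ht)))))
  -- g nondecreasing on [c₁, c₂]
  have hmono : ∀ x y : ℝ, c₁ ≤ x → x ≤ y → y ≤ c₂ → g x ≤ g y := by
    intro x y hx hxy hy
    rw [hsplit x y (hc₁.trans hx) hxy]
    have : (∫ t in Ioc x y, f t) ≤ 0 :=
      setIntegral_nonpos measurableSet_Ioc
        (fun t ht => hneg t ⟨hx.trans (le_of_lt ht.1), ht.2.trans hy⟩)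
    linarith
  -- g nonincreasing on [0, c₁]
  have hanti : ∀ x y : ℝ, 0 ≤ x → x ≤ y → y ≤ c₁ → g y ≤ g x := by
    intro x y hx hxy hy
    rw [hsplit x y hx hxy]
    have : 0 ≤ (∫ t in Ioc x y, f t) :=
      setIntegral_nonneg measurableSet_Ioc
        (fun t ht => hpos₁ t ⟨hx.trans (le_of_lt ht.1), ht.2.trans hy⟩)
    linarith
  -- continuity of g on [0, c₂]
  have hcont : ContinuousOn g (Icc 0 c₂) := by
    have h := intervalIntegral.continuousOn_primitive (a := 0) (b := c₂) (μ := volume)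
      (hf.mono_set Icc_subset_Ici_self)
    have : ContinuousOn (fun x => g 0 - ∫ t in Ioc 0 x, f t) (Icc 0 c₂) :=
      (continuousOn_const.sub h)
    refine this.congr (fun x hx => ?_)
    rw [hsplit 0 x le_rfl hx.1]
    ring
  by_cases h1 : 0 ≤ g c₁
  · -- g ≥ 0 everywhere on [0,∞)
    right; right
    intro x hx
    rcases le_or_gt x c₁ with h | h
    · exact h1.trans (hanti x c₁ hx h le_rfl)
    rcases le_or_gt x c₂ with h' | h'
    · exact h1.trans (hmono c₁ x le_rfl h.le h')
    · exact hg₂ x h'.le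
  · push_neg at h1
    -- IVT on [c₁, c₂] for a zero d₂
    have hgc₂ : 0 ≤ g c₂ := hg₂ c₂ (mem_Ici.mpr le_rfl)
    have hivt : ∃ d₂ ∈ Icc c₁ c₂, g d₂ = 0 := by
      have := intermediate_value_Icc hc₁₂ (hcont.mono (Icc_subset_Icc hc₁ le_rfl))
      have h0 : (0:ℝ) ∈ Icc (g c₁) (g c₂) := ⟨h1.le, hgc₂⟩
      obtain ⟨d₂, hd₂, hgd₂⟩ := this h0
      exact ⟨d₂, hd₂, hgd₂⟩
    obtain ⟨d₂, hd₂, hgd₂⟩ := hivt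
    have hIci : ∀ x ∈ Ici d₂, 0 ≤ g x := by
      intro x hx
      rcases le_or_gt x c₂ with h' | h'
      · rw [← hgd₂]; exact hmono d₂ x hd₂.1 hx h'
      · exact hg₂ x h'.le
    have hmid : ∀ x ∈ Icc c₁ d₂, g x ≤ 0 := by
      intro x hx
      rw [← hgd₂]; exact hmono x d₂ hx.1 hx.2 hd₂.2
    by_cases h0 : 0 < g 0
    · -- pattern '+,−,+' : IVT on [0, c₁]
      left
      have hivt' : ∃ d₁ ∈ Icc 0 c₁, g d₁ = 0 := by
        have := intermediate_value_Icc' hc₁ (hcont.mono (Icc_subset_Icc le_rfl hc₁₂))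
        obtain ⟨d₁, hd₁, hgd₁⟩ := this ⟨h1.le, h0.le⟩
        exact ⟨d₁, hd₁, hgd₁⟩
      obtain ⟨d₁, hd₁, hgd₁⟩ := hivt'
      refine ⟨d₁, d₂, hd₁.1, hd₁.2.trans hd₂.1, ?_, ?_, hIci⟩
      · intro x hx
        rw [← hgd₁]; exact hanti x d₁ hx.1 hx.2 hd₁.2
      · intro x hx
        rcases le_or_gt x c₁ with h' | h'
        · rw [← hgd₁]; exact hanti d₁ x hd₁.1 hx.1 h'
        · exact hmid x ⟨h'.le, hx.2⟩
    · -- pattern '−,+'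
      right; left
      push_neg at h0
      refine ⟨d₂, hc₁.trans hd₂.1, ?_, hIci⟩
      intro x hx
      rcases le_or_gt x c₁ with h' | h'
      · exact (hanti 0 x le_rfl hx.1 h').trans h0
      · exact hmid x ⟨h'.le, hx.2⟩
end

section
/- Let X have a Gamma distribution with shape α ≥ 1 and scale θ > 0. Then the failure rate r(x) = f_X(x)/(1−F_X(x)) is monotone increasing on (0,∞). -/
open Set MeasureTheory

-- pointwise log-concavity inequality
lemma gamma_key_ineq (α θ : ℝ) (hα : 1 ≤ α) (hθ : 0 < θ) {x s d : ℝ}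
    (hx : 0 < x) (hxs : x ≤ s) (hd : 0 ≤ d) :
    (x ^ (α - 1) * Real.exp (-x / θ)) * ((s + d) ^ (α - 1) * Real.exp (-(s + d) / θ)) ≤
      ((x + d) ^ (α - 1) * Real.exp (-(x + d) / θ)) * (s ^ (α - 1) * Real.exp (-s / θ)) := by
  have hs : 0 < s := lt_of_lt_of_le hx hxs
  have hexp : Real.exp (-x / θ) * Real.exp (-(s + d) / θ)
      = Real.exp (-(x + d) / θ) * Real.exp (-s / θ) := by
    rw [← Real.exp_add, ← Real.exp_add]; ring_nf
  have hpow : x ^ (α - 1) * (s + d) ^ (α - 1) ≤ (x + d) ^ (α - 1) * s ^ (α - 1) := by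
    rw [← Real.mul_rpow hx.le (by positivity), ← Real.mul_rpow (by positivity) hs.le]
    refine Real.rpow_le_rpow (by positivity) ?_ (by linarith)
    nlinarith
  calc (x ^ (α - 1) * Real.exp (-x / θ)) * ((s + d) ^ (α - 1) * Real.exp (-(s + d) / θ))
      = (x ^ (α - 1) * (s + d) ^ (α - 1)) * (Real.exp (-x / θ) * Real.exp (-(s + d) / θ)) := by
        ring
    _ ≤ ((x + d) ^ (α - 1) * s ^ (α - 1)) * (Real.exp (-(x + d) / θ) * Real.exp (-s / θ)) := by
        rw [hexp]
        exact mul_le_mul_of_nonneg_right hpow (by positivity)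
    _ = ((x + d) ^ (α - 1) * Real.exp (-(x + d) / θ)) * (s ^ (α - 1) * Real.exp (-s / θ)) := by
        ring

section

variable (α θ : ℝ)

noncomputable def gdens : ℝ → ℝ := fun t => t ^ (α - 1) * Real.exp (-t / θ)

lemma gdens_integrableOn (hα : 1 ≤ α) (hθ : 0 < θ) :
    IntegrableOn (gdens α θ) (Ioi 0) := by
  have h := integrableOn_rpow_mul_exp_neg_mul_rpow (s := α - 1) (p := 1) (b := 1 / θ)
    (by linarith) one_pos (by positivity)
  refine h.congr_fun (fun t ht => ?_) measurableSet_Ioi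
  simp only [gdens, Real.rpow_one]
  ring_nf

lemma gdens_total (hα : 1 ≤ α) (hθ : 0 < θ) :
    ∫ t in Ioi (0:ℝ), gdens α θ t = θ ^ α * Real.Gamma α := by
  have h := Real.integral_rpow_mul_exp_neg_mul_Ioi (a := α) (r := 1 / θ)
    (by linarith) (by positivity)
  rw [one_div, one_div, inv_inv] at h
  rw [← h]
  refine setIntegral_congr_fun measurableSet_Ioi (fun t ht => ?_)
  simp only [gdens]
  rw [neg_div, div_eq_inv_mul]

lemma gdens_pos {t : ℝ} (ht : 0 < t) : 0 < gdens α θ t := by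
  have : (0:ℝ) < t ^ (α - 1) := Real.rpow_pos_of_pos ht _
  exact mul_pos this (Real.exp_pos _)

lemma gdens_tail_pos (hα : 1 ≤ α) (hθ : 0 < θ) {x : ℝ} (hx : 0 < x) :
    0 < ∫ t in Ioi x, gdens α θ t := by
  have hint : IntegrableOn (gdens α θ) (Ioi x) :=
    (gdens_integrableOn α θ hα hθ).mono_set (Ioi_subset_Ioi hx.le)
  rw [setIntegral_pos_iff_support_of_nonneg_ae ?_ hint]
  · have hsub : Ioi x ⊆ Function.support (gdens α θ) ∩ Ioi x := fun t ht =>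
      ⟨(gdens_pos α θ (hx.trans ht)).ne', ht⟩
    calc (0:ENNReal) < volume (Ioi x) := by simp [Real.volume_Ioi]
      _ ≤ _ := measure_mono hsub
  · filter_upwards [ae_restrict_mem measurableSet_Ioi] with t ht
    exact (gdens_pos α θ (hx.trans ht)).le

end

lemma gdens_tail_shift (α θ d x : ℝ) :
    ∫ t in Ioi (x + d), gdens α θ t = ∫ s in Ioi x, gdens α θ (s + d) := by
  have h := (measurePreserving_add_right (volume : Measure ℝ) d).setIntegral_preimage_emb
    (measurableEmbedding_addRight d) (gdens α θ) (Ioi (x + d))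
  rw [← h]
  congr 1
  ext t
  simp [add_comm]

/-- The Gamma(α,θ) failure rate is increasing on (0,∞) when α ≥ 1. -/
theorem gamma_failure_rate_increasing
    (α θ : ℝ) (hα : 1 ≤ α) (hθ : 0 < θ)
    (f F r : ℝ → ℝ)
    (hf : ∀ x : ℝ, 0 < x →
      f x = x ^ (α - 1) * Real.exp (-x / θ) / (θ ^ α * Real.Gamma α))
    (hF : ∀ x : ℝ, F x = ∫ t in (0:ℝ)..x, f t)
    (hr : ∀ x : ℝ, r x = f x / (1 - F x)) :
    MonotoneOn r (Ioi 0) := by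
  have hα0 : 0 < α := lt_of_lt_of_le one_pos hα
  set c := θ ^ α * Real.Gamma α with hc
  have hcpos : 0 < c := mul_pos (Real.rpow_pos_of_pos hθ α) (Real.Gamma_pos_of_pos hα0)
  set g := gdens α θ with hgdef
  have hgint : IntegrableOn g (Ioi 0) := gdens_integrableOn α θ hα hθ
  -- f agrees with g / c on Ioi 0
  have hfg : ∀ t ∈ Ioi (0:ℝ), f t = g t / c := fun t ht => hf t ht
  have hfint : IntegrableOn f (Ioi 0) := by
    exact IntegrableOn.congr_fun (hgint.div_const c) (fun t ht => (hfg t ht).symm)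
      measurableSet_Ioi
  -- tail formula for 1 - F
  have hFval : ∀ x : ℝ, 0 < x → 1 - F x = (∫ t in Ioi x, g t) / c := by
    intro x hx
    have hsplit : (∫ t in Ioi (0:ℝ), f t)
        = (∫ t in Ioc (0:ℝ) x, f t) + ∫ t in Ioi x, f t := by
      rw [← setIntegral_union ?_ measurableSet_Ioi ?_ ?_]
      · rw [Ioc_union_Ioi_eq_Ioi hx.le]
      · exact Ioc_disjoint_Ioi le_rfl
      · exact hfint.mono_set (fun t ht => ht.1)
      · exact hfint.mono_set (Ioi_subset_Ioi hx.le)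
    have htot : (∫ t in Ioi (0:ℝ), f t) = 1 := by
      rw [setIntegral_congr_fun measurableSet_Ioi hfg, integral_div, hgdef,
        gdens_total α θ hα hθ, ← hc, div_self hcpos.ne']
    have htail : (∫ t in Ioi x, f t) = (∫ t in Ioi x, g t) / c := by
      rw [setIntegral_congr_fun measurableSet_Ioi (fun t ht => hfg t (hx.trans ht)),
        integral_div]
    have hFx : F x = ∫ t in Ioc (0:ℝ) x, f t := by
      rw [hF, intervalIntegral.integral_of_le hx.le]
    rw [hFx]
    linarith [hsplit, htot, htail]
  have hrval : ∀ x : ℝ, 0 < x → r x = g x / ∫ t in Ioi x, g t := by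
    intro x hx
    have h2 : (∫ t in Ioi x, g t) ≠ 0 := (gdens_tail_pos α θ hα hθ hx).ne'
    rw [hr, hFval x hx, hf x hx, div_div_div_cancel_right₀ hcpos.ne']
    rfl
  intro x hx y hy hxy
  simp only [mem_Ioi] at hx hy
  rw [hrval x hx, hrval y hy]
  set d := y - x with hd
  have hd0 : 0 ≤ d := by rw [hd]; linarith
  have hyx : y = x + d := by rw [hd]; ring
  have hGx : 0 < ∫ t in Ioi x, g t := gdens_tail_pos α θ hα hθ hx
  have hGy : 0 < ∫ t in Ioi y, g t := gdens_tail_pos α θ hα hθ hy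
  rw [div_le_div_iff₀ hGx hGy]
  have hshift : ∫ t in Ioi y, g t = ∫ s in Ioi x, g (s + d) := by
    rw [hyx]; exact gdens_tail_shift α θ d x
  rw [hshift, ← integral_const_mul, ← integral_const_mul]
  have hpre : (fun s : ℝ => s + d) ⁻¹' Ioi y = Ioi x := by
    ext t; simp [hyx]
  have hintshift : IntegrableOn (fun s => g (s + d)) (Ioi x) := by
    have h := ((measurePreserving_add_right (volume : Measure ℝ) d).integrableOn_comp_preimage
      (measurableEmbedding_addRight d) (f := g) (s := Ioi y)).mpr
      (hgint.mono_set (Ioi_subset_Ioi hy.le))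
    rwa [hpre] at h
  refine setIntegral_mono_on (hintshift.const_mul _)
    ((hgint.mono_set (Ioi_subset_Ioi hx.le)).const_mul _) measurableSet_Ioi ?_
  intro s hs
  rw [hyx]
  exact gamma_key_ineq α θ hα hθ hx (le_of_lt hs) hd0
end

section
/- Let X have a Gamma distribution with shape 0 < α < 1 and scale θ > 0. Then the failure rate r(x) = f_X(x)/(1−F_X(x)) is monotone decreasing on (0,∞). -/
open Set MeasureTheory

/-- The Gamma(α,θ) failure rate is decreasing on (0,∞) when 0 < α < 1. -/
theorem gamma_failure_rate_decreasing
    (α θ : ℝ) (hα0 : 0 < α) (hα : α < 1) (hθ : 0 < θ)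
    (f F r : ℝ → ℝ)
    (hf : ∀ x : ℝ, 0 < x →
      f x = x ^ (α - 1) * Real.exp (-x / θ) / (θ ^ α * Real.Gamma α))
    (hF : ∀ x : ℝ, F x = ∫ t in (0:ℝ)..x, f t)
    (hr : ∀ x : ℝ, r x = f x / (1 - F x)) :
    AntitoneOn r (Ioi 0) := by
  have hrinv : 0 < θ⁻¹ := inv_pos.mpr hθ
  set p := ProbabilityTheory.gammaPDFReal α θ⁻¹ with hpdef
  have hmeas := ProbabilityTheory.measurable_gammaPDFReal α θ⁻¹
  have hnonneg := ProbabilityTheory.gammaPDFReal_nonneg hα0 hrinv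
  have hpos : ∀ x : ℝ, 0 < x → 0 < p x :=
    fun x hx => ProbabilityTheory.gammaPDFReal_pos hα0 hrinv hx
  -- f agrees with the gamma pdf on positives
  have hfp : ∀ x : ℝ, 0 < x → f x = p x := by
    intro x hx
    rw [hf x hx, hpdef, ProbabilityTheory.gammaPDFReal, if_pos hx.le,
      Real.inv_rpow hθ.le, show -x / θ = -(θ⁻¹ * x) by ring]
    field_simp
  have hp0 : ∀ x : ℝ, x ≤ 0 → p x = 0 := by
    intro x hx
    rcases lt_or_eq_of_le hx with h | h
    · rw [hpdef, ProbabilityTheory.gammaPDFReal, if_neg (not_le.mpr h)]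
    · subst h
      rw [hpdef, ProbabilityTheory.gammaPDFReal, if_pos le_rfl,
        Real.zero_rpow (by linarith : α - 1 ≠ 0)]
      ring
  have hint : Integrable p := by
    refine ⟨hmeas.aestronglyMeasurable, ?_⟩
    rw [hasFiniteIntegral_iff_ofReal (ae_of_all _ hnonneg)]
    have h1 : ∫⁻ x, ENNReal.ofReal (p x) = 1 :=
      ProbabilityTheory.lintegral_gammaPDF_eq_one hα0 hrinv
    rw [h1]
    exact ENNReal.one_lt_top
  have htot : ∫ x, p x = 1 := by
    have h1 : ∫⁻ x, ENNReal.ofReal (p x) = 1 :=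
      ProbabilityTheory.lintegral_gammaPDF_eq_one hα0 hrinv
    rw [integral_eq_lintegral_of_nonneg_ae (ae_of_all _ hnonneg) hmeas.aestronglyMeasurable, h1]
    simp
  have hIoi0 : ∫ t in Ioi 0, p t = 1 := by
    have hsplit := intervalIntegral.integral_Iic_add_Ioi (b := (0:ℝ)) hint.integrableOn hint.integrableOn
    have hIic : ∫ t in Iic (0:ℝ), p t = 0 :=
      setIntegral_eq_zero_of_forall_eq_zero fun x hx => hp0 x hx
    rw [hIic, zero_add, htot] at hsplit
    exact hsplit
  -- survival function
  have hG : ∀ x : ℝ, 0 < x → 1 - F x = ∫ t in Ioi x, p t := by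
    intro x hx
    have hFx : F x = ∫ t in Ioc 0 x, p t := by
      rw [hF x, intervalIntegral.integral_of_le hx.le]
      exact setIntegral_congr_fun measurableSet_Ioc fun t ht => hfp t ht.1
    have hsum : (∫ t in Ioc 0 x, p t) + ∫ t in Ioi x, p t = 1 := by
      rw [← setIntegral_union (Ioc_disjoint_Ioi le_rfl) measurableSet_Ioi
        hint.integrableOn hint.integrableOn, Ioc_union_Ioi_eq_Ioi hx.le, hIoi0]
    rw [hFx]; linarith
  have hGpos : ∀ x : ℝ, 0 < x → 0 < ∫ t in Ioi x, p t := by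
    intro x hx
    rw [setIntegral_pos_iff_support_of_nonneg_ae (ae_of_all _ hnonneg) hint.integrableOn]
    have hsupp : Function.support p ∩ Ioi x = Ioi x :=
      inter_eq_right.mpr fun t ht => (hpos t (hx.trans ht)).ne'
    rw [hsupp, Real.volume_Ioi]
    exact ENNReal.zero_lt_top
  -- main monotonicity
  intro x hx y hy hxy
  rcases eq_or_lt_of_le hxy with h | hlt
  · subst h; exact le_refl _
  simp only [mem_Ioi] at hx hy
  rw [hr x, hr y, hG x hx, hG y hy, hfp x hx, hfp y hy,
    div_le_div_iff₀ (hGpos y hy) (hGpos x hx)]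
  set c := y - x with hcdef
  have hc : 0 < c := by linarith
  have htrans : ∫ t in Ioi y, p t = ∫ t in Ioi x, p (t + c) := by
    calc ∫ t in Ioi y, p t = ∫ t in Ioi y, p t ∂(Measure.map (· + c) volume) := by
          rw [map_add_right_eq_self volume c]
      _ = ∫ t in (· + c) ⁻¹' Ioi y, p (t + c) :=
          (measurableEmbedding_addRight c).setIntegral_map p (Ioi y)
      _ = ∫ t in Ioi x, p (t + c) := by
          rw [preimage_add_const_Ioi, show y - c = x by ring]
  have hint' : IntegrableOn (fun t => p (t + c)) (Ioi x) :=
    (hint.comp_add_right c).integrableOn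
  have hkey : ∀ t ∈ Ioi x, p y * p t ≤ p x * p (t + c) := by
    intro t ht
    rw [mem_Ioi] at ht
    have htpos : 0 < t := hx.trans ht
    have htc : 0 < t + c := by linarith
    have hΓ : 0 < Real.Gamma α := Real.Gamma_pos_of_pos hα0
    simp only [hpdef, ProbabilityTheory.gammaPDFReal, if_pos hy.le, if_pos htpos.le,
      if_pos hx.le, if_pos htc.le]
    set C := θ⁻¹ ^ α / Real.Gamma α with hC
    have hCpos : 0 < C := by positivity
    have hexp : Real.exp (-(θ⁻¹ * y)) * Real.exp (-(θ⁻¹ * t))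
        = Real.exp (-(θ⁻¹ * x)) * Real.exp (-(θ⁻¹ * (t + c))) := by
      rw [← Real.exp_add, ← Real.exp_add]
      congr 1
      rw [hcdef]; ring
    have hrp : y ^ (α - 1) * t ^ (α - 1) ≤ x ^ (α - 1) * (t + c) ^ (α - 1) := by
      rw [← Real.mul_rpow hy.le htpos.le, ← Real.mul_rpow hx.le htc.le]
      refine Real.rpow_le_rpow_of_nonpos (mul_pos hx htc) ?_ (by linarith)
      rw [hcdef]; nlinarith
    have h1 : C * C * (Real.exp (-(θ⁻¹ * y)) * Real.exp (-(θ⁻¹ * t)))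
          * (y ^ (α - 1) * t ^ (α - 1))
        ≤ C * C * (Real.exp (-(θ⁻¹ * y)) * Real.exp (-(θ⁻¹ * t)))
          * (x ^ (α - 1) * (t + c) ^ (α - 1)) := by
      refine mul_le_mul_of_nonneg_left hrp ?_
      positivity
    calc C * y ^ (α - 1) * Real.exp (-(θ⁻¹ * y)) * (C * t ^ (α - 1) * Real.exp (-(θ⁻¹ * t)))
        = C * C * (Real.exp (-(θ⁻¹ * y)) * Real.exp (-(θ⁻¹ * t)))
          * (y ^ (α - 1) * t ^ (α - 1)) := by ring
      _ ≤ C * C * (Real.exp (-(θ⁻¹ * y)) * Real.exp (-(θ⁻¹ * t)))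
          * (x ^ (α - 1) * (t + c) ^ (α - 1)) := h1
      _ = C * C * (Real.exp (-(θ⁻¹ * x)) * Real.exp (-(θ⁻¹ * (t + c))))
          * (x ^ (α - 1) * (t + c) ^ (α - 1)) := by rw [hexp]
      _ = C * x ^ (α - 1) * Real.exp (-(θ⁻¹ * x))
          * (C * (t + c) ^ (α - 1) * Real.exp (-(θ⁻¹ * (t + c)))) := by ring
  calc p y * ∫ t in Ioi x, p t = ∫ t in Ioi x, p y * p t := (integral_const_mul _ _).symm
    _ ≤ ∫ t in Ioi x, p x * p (t + c) :=
        setIntegral_mono_on (hint.integrableOn.const_mul _) (hint'.const_mul _)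
          measurableSet_Ioi hkey
    _ = p x * ∫ t in Ioi x, p (t + c) := integral_const_mul _ _
    _ = p x * ∫ t in Ioi y, p t := by rw [htrans]
end

section
/- Let X have inverse gamma distribution with shape 1 and scale β > 0, so F̄_X(x) = 1 − e^{−β/x} for x > 0, and let λ > 0. Then the function c(x) = −(1/λ) log( (β e^{−β/x}) / (x² (1 − e^{−β/x})) ) is neither convex nor concave on (0,∞). -/
open Set

noncomputable def phiAux (t : ℝ) : ℝ :=
  1/t + 2 * Real.log t + Real.log (1 - Real.exp (-1/t))

lemma one_sub_exp_pos {t : ℝ} (ht : 0 < t) : 0 < 1 - Real.exp (-1/t) := by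
  have : Real.exp (-1/t) < 1 := by
    rw [Real.exp_lt_one_iff]
    have h0 : 0 < 1/t := by positivity
    have : -1/t = -(1/t) := by ring
    linarith [this]
  linarith

lemma phi_eq (t : ℝ) (ht : 0 < t) :
    phiAux t = Real.log (Real.exp (1/t) * t ^ 2 * (1 - Real.exp (-1/t))) := by
  have h1 := one_sub_exp_pos ht
  rw [Real.log_mul (by positivity) (ne_of_gt h1),
      Real.log_mul (Real.exp_ne_zero _) (by positivity),
      Real.log_exp, Real.log_pow, phiAux]
  ring

set_option maxHeartbeats 1000000 in
lemma prod1 :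
    Real.exp (1/1) * 1 ^ 2 * (1 - Real.exp (-1/1))
      * (Real.exp (1/3) * 3 ^ 2 * (1 - Real.exp (-1/3)))
    < (Real.exp (1/2) * 2 ^ 2 * (1 - Real.exp (-1/2))) ^ 2 := by
  set u := Real.exp (1/6) with hudef
  have hu0 : (0:ℝ) < u := Real.exp_pos _
  have e1 : Real.exp (1/1) = u ^ 6 := by
    rw [hudef, ← Real.exp_nat_mul]; norm_num
  have e13 : Real.exp (1/3) = u ^ 2 := by
    rw [hudef, ← Real.exp_nat_mul]; norm_num
  have e12 : Real.exp (1/2) = u ^ 3 := by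
    rw [hudef, ← Real.exp_nat_mul]; norm_num
  have em1 : Real.exp (-1/1) = (u ^ 6)⁻¹ := by
    rw [show (-1/1 : ℝ) = -(1/1) by ring, Real.exp_neg, e1]
  have em13 : Real.exp (-1/3) = (u ^ 2)⁻¹ := by
    rw [show (-1/3 : ℝ) = -(1/3) by ring, Real.exp_neg, e13]
  have em12 : Real.exp (-1/2) = (u ^ 3)⁻¹ := by
    rw [show (-1/2 : ℝ) = -(1/2) by ring, Real.exp_neg, e12]
  rw [e1, e13, e12, em1, em13, em12]
  have hul : 1.1813 < u := by
    by_contra h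
    push_neg at h
    have h6 : u ^ 6 ≤ (1.1813:ℝ) ^ 6 := pow_le_pow_left₀ (le_of_lt hu0) h 6
    have hex : Real.exp 1 = u ^ 6 := by rw [hudef, ← Real.exp_nat_mul]; norm_num
    have := Real.exp_one_gt_d9
    rw [hex] at this
    nlinarith
  have huu : u < 1.1814 := by
    by_contra h
    push_neg at h
    have h6 : (1.1814:ℝ) ^ 6 ≤ u ^ 6 := pow_le_pow_left₀ (by norm_num) h 6
    have hex : Real.exp 1 = u ^ 6 := by rw [hudef, ← Real.exp_nat_mul]; norm_num
    have := Real.exp_one_lt_d9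
    rw [hex] at this
    nlinarith
  have h2l : (1.395:ℝ) < u ^ 2 := by nlinarith
  have h3u : u ^ 3 < 1.649 := by nlinarith
  have h6l : (2.716:ℝ) < u ^ 6 := by nlinarith
  have h2u : u ^ 2 < 1.39571 := by nlinarith
  have h4u : u ^ 4 < 1.9482 := by nlinarith [sq_nonneg (u ^ 2)]
  have h8u : u ^ 8 < 3.7955 := by nlinarith [sq_nonneg (u ^ 4)]
  have h6ne : (u ^ 6) ≠ 0 := by positivity
  have h2ne : (u ^ 2) ≠ 0 := by positivity
  have h3ne : (u ^ 3) ≠ 0 := by positivity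
  have expand : u ^ 6 * 1 ^ 2 * (1 - (u ^ 6)⁻¹) * (u ^ 2 * 3 ^ 2 * (1 - (u ^ 2)⁻¹))
      = 9 * (u ^ 6 - 1) * (u ^ 2 - 1) := by
    field_simp
    ring
  have expand2 : (u ^ 3 * 2 ^ 2 * (1 - (u ^ 3)⁻¹)) ^ 2 = 16 * (u ^ 3 - 1) ^ 2 := by
    field_simp
    ring
  rw [expand, expand2]
  nlinarith [h2l, h3u, h6l, h8u]

set_option maxHeartbeats 1000000 in
lemma prod2 :
    (Real.exp 2 * (1/2:ℝ) ^ 2 * (1 - Real.exp (-2))) ^ 2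
    < Real.exp 4 * (1/4:ℝ) ^ 2 * (1 - Real.exp (-4))
      * (Real.exp (4/3) * (3/4:ℝ) ^ 2 * (1 - Real.exp (-4/3))) := by
  set v := Real.exp (2/3) with hvdef
  have hv0 : (0:ℝ) < v := Real.exp_pos _
  have e2 : Real.exp 2 = v ^ 3 := by
    rw [hvdef, ← Real.exp_nat_mul]; norm_num
  have e4 : Real.exp 4 = v ^ 6 := by
    rw [hvdef, ← Real.exp_nat_mul]; norm_num
  have e43 : Real.exp (4/3) = v ^ 2 := by
    rw [hvdef, ← Real.exp_nat_mul]; norm_num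
  have em2 : Real.exp (-2) = (v ^ 3)⁻¹ := by
    rw [show (-2 : ℝ) = -(2) by ring, Real.exp_neg, e2]
  have em4 : Real.exp (-4) = (v ^ 6)⁻¹ := by
    rw [show (-4 : ℝ) = -(4) by ring, Real.exp_neg, e4]
  have em43 : Real.exp (-4/3) = (v ^ 2)⁻¹ := by
    rw [show (-4/3 : ℝ) = -(4/3) by ring, Real.exp_neg, e43]
  rw [e2, e4, e43, em2, em4, em43]
  have hlo := Real.exp_one_gt_d9
  have hhi := Real.exp_one_lt_d9
  have h3eq : v ^ 3 = Real.exp 1 ^ 2 := by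
    rw [hvdef, ← Real.exp_nat_mul, ← Real.exp_nat_mul]; norm_num
  have hvl : 1.94 < v := by
    by_contra h
    push_neg at h
    have h3 : v ^ 3 ≤ (1.94:ℝ) ^ 3 := pow_le_pow_left₀ (le_of_lt hv0) h 3
    rw [h3eq] at h3
    nlinarith
  have hvu : v < 1.95 := by
    by_contra h
    push_neg at h
    have h3 : (1.95:ℝ) ^ 3 ≤ v ^ 3 := pow_le_pow_left₀ (by norm_num) h 3
    rw [h3eq] at h3
    nlinarith
  have h2u : v ^ 2 < 3.8025 := by nlinarith
  have h3l : (7.30:ℝ) < v ^ 3 := by nlinarith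
  have h3u : v ^ 3 < 7.42 := by nlinarith
  have h6u : v ^ 6 < 55.06 := by nlinarith [sq_nonneg (v ^ 3)]
  have h6l : (53.29:ℝ) < v ^ 6 := by nlinarith [sq_nonneg (v ^ 3)]
  have h8l : (199.0:ℝ) < v ^ 8 := by nlinarith [sq_nonneg (v ^ 4), sq_nonneg (v ^ 3), h3l, h2u]
  have h6ne : (v ^ 6) ≠ 0 := by positivity
  have h2ne : (v ^ 2) ≠ 0 := by positivity
  have h3ne : (v ^ 3) ≠ 0 := by positivity
  have expand : v ^ 6 * (1/4:ℝ) ^ 2 * (1 - (v ^ 6)⁻¹) * (v ^ 2 * (3/4:ℝ) ^ 2 * (1 - (v ^ 2)⁻¹))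
      = 9/256 * ((v ^ 6 - 1) * (v ^ 2 - 1)) := by
    field_simp
    ring
  have expand2 : (v ^ 3 * (1/2:ℝ) ^ 2 * (1 - (v ^ 3)⁻¹)) ^ 2 = 1/16 * (v ^ 3 - 1) ^ 2 := by
    field_simp
    ring
  rw [expand, expand2]
  nlinarith [h2u, h3l, h3u, h6u, h6l, h8l]

lemma ineq1 : phiAux 1 + phiAux 3 < 2 * phiAux 2 := by
  rw [phi_eq 1 one_pos, phi_eq 3 (by norm_num), phi_eq 2 (by norm_num)]
  have hA : 0 < Real.exp (1/1) * 1 ^ 2 * (1 - Real.exp (-1/1)) :=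
    mul_pos (by positivity) (one_sub_exp_pos one_pos)
  have hB : 0 < Real.exp (1/3) * 3 ^ 2 * (1 - Real.exp (-1/3)) :=
    mul_pos (by positivity) (one_sub_exp_pos (by norm_num))
  have h2 : (2:ℝ) * Real.log (Real.exp (1/2) * 2 ^ 2 * (1 - Real.exp (-1/2)))
      = Real.log ((Real.exp (1/2) * 2 ^ 2 * (1 - Real.exp (-1/2))) ^ 2) := by
    rw [Real.log_pow]; norm_num
  rw [← Real.log_mul hA.ne' hB.ne', h2]
  exact Real.log_lt_log (mul_pos hA hB) prod1

lemma ineq2 : 2 * phiAux (1/2) < phiAux (1/4) + phiAux (3/4) := by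
  rw [phi_eq (1/2) (by norm_num), phi_eq (1/4) (by norm_num), phi_eq (3/4) (by norm_num)]
  rw [show (1:ℝ)/(1/2) = 2 by norm_num, show (-1:ℝ)/(1/2) = -2 by norm_num,
      show (1:ℝ)/(1/4) = 4 by norm_num, show (-1:ℝ)/(1/4) = -4 by norm_num,
      show (1:ℝ)/(3/4) = 4/3 by norm_num, show (-1:ℝ)/(3/4) = -4/3 by norm_num]
  have hexp2 : Real.exp (-2:ℝ) < 1 := by rw [Real.exp_lt_one_iff]; norm_num
  have hexp4 : Real.exp (-4:ℝ) < 1 := by rw [Real.exp_lt_one_iff]; norm_num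
  have hexp43 : Real.exp (-4/3:ℝ) < 1 := by rw [Real.exp_lt_one_iff]; norm_num
  have hA : 0 < Real.exp 4 * (1/4:ℝ) ^ 2 * (1 - Real.exp (-4)) :=
    mul_pos (by positivity) (by linarith)
  have hB : 0 < Real.exp (4/3) * (3/4:ℝ) ^ 2 * (1 - Real.exp (-4/3)) :=
    mul_pos (by positivity) (by linarith)
  have hC : 0 < Real.exp 2 * (1/2:ℝ) ^ 2 * (1 - Real.exp (-2)) :=
    mul_pos (by positivity) (by linarith)
  have h2 : (2:ℝ) * Real.log (Real.exp 2 * (1/2:ℝ) ^ 2 * (1 - Real.exp (-2)))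
      = Real.log ((Real.exp 2 * (1/2:ℝ) ^ 2 * (1 - Real.exp (-2))) ^ 2) := by
    rw [Real.log_pow]; norm_num
  rw [← Real.log_mul hA.ne' hB.ne', h2]
  exact Real.log_lt_log (by positivity) prod2

/-- The function c(x) = −(1/λ) log( β e^{−β/x} / (x²(1 − e^{−β/x})) ) is neither
convex nor concave on (0,∞). -/
theorem inverse_gamma_neither_convex_nor_concave
    (β lam : ℝ) (hβ : 0 < β) (hlam : 0 < lam)
    (c : ℝ → ℝ)
    (hc : ∀ x : ℝ, 0 < x →
      c x = -(1 / lam) * Real.log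
        ((β * Real.exp (-β / x)) / (x ^ 2 * (1 - Real.exp (-β / x))))) :
    ¬ ConvexOn ℝ (Ioi 0) c ∧ ¬ ConcaveOn ℝ (Ioi 0) c := by
  have hβne : β ≠ 0 := ne_of_gt hβ
  have hval : ∀ t : ℝ, 0 < t → c (β * t) = (1/lam) * (Real.log β + phiAux t) := by
    intro t ht
    have hx : 0 < β * t := mul_pos hβ ht
    rw [hc _ hx]
    have harg : -β / (β * t) = -1/t := by field_simp
    rw [harg]
    have h1 := one_sub_exp_pos ht
    have hnum : (0:ℝ) < β * Real.exp (-1/t) := by positivity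
    have hden : (0:ℝ) < (β * t) ^ 2 * (1 - Real.exp (-1/t)) := by positivity
    rw [Real.log_div hnum.ne' hden.ne',
        Real.log_mul hβne (Real.exp_ne_zero _),
        Real.log_mul (by positivity) h1.ne',
        Real.log_exp, Real.log_pow,
        Real.log_mul hβne (ne_of_gt ht)]
    rw [phiAux]
    push_cast
    ring
  constructor
  · intro h
    have hmem1 : β * 1 ∈ Ioi (0:ℝ) := by simp [hβ]
    have hmem3 : β * 3 ∈ Ioi (0:ℝ) := by
      simp only [mem_Ioi]; positivity
    have key := h.2 hmem1 hmem3 (by norm_num : (0:ℝ) ≤ 1/2) (by norm_num : (0:ℝ) ≤ 1/2)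
      (by norm_num)
    simp only [smul_eq_mul] at key
    rw [show (1/2:ℝ) * (β * 1) + (1/2:ℝ) * (β * 3) = β * 2 by ring] at key
    rw [hval 1 one_pos, hval 3 (by norm_num), hval 2 (by norm_num)] at key
    have ha : (0:ℝ) < 1/lam := by positivity
    nlinarith [ineq1, ha, key]
  · intro h
    have hmem1 : β * (1/4) ∈ Ioi (0:ℝ) := by
      simp only [mem_Ioi]; positivity
    have hmem3 : β * (3/4) ∈ Ioi (0:ℝ) := by
      simp only [mem_Ioi]; positivity
    have key := h.2 hmem1 hmem3 (by norm_num : (0:ℝ) ≤ 1/2) (by norm_num : (0:ℝ) ≤ 1/2)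
      (by norm_num)
    simp only [smul_eq_mul] at key
    rw [show (1/2:ℝ) * (β * (1/4)) + (1/2:ℝ) * (β * (3/4)) = β * (1/2) by ring] at key
    rw [hval (1/4) (by norm_num), hval (3/4) (by norm_num), hval (1/2) (by norm_num)] at key
    have ha : (0:ℝ) < 1/lam := by positivity
    nlinarith [ineq2, ha, key]
end

section
/- Let α′ > α > 1 and θ₁, θ₂ > 0. For every a > 0 and b ∈ ℝ, the function P(x) = −x^α + (ax+b)^{α′} + C (C any real constant), defined for x > max(0, −b/a), has the property that P′(x) = aα′(ax+b)^{α′−1} − α x^{α−1} changes sign at most twice on (max(0,−b/a), ∞), and in case of two sign changes the order is '+, −, +'. -/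
open Set

/-- For α′ > α > 1 and a > 0, b ∈ ℝ, the function
P′(x) = aα′(ax+b)^{α′−1} − αx^{α−1} changes sign at most twice on
(max(0,−b/a), ∞), and in case of two sign changes the order is '+,−,+'. -/
theorem weibull_derivative_sign_change
    (α α' a b : ℝ) (hα : 1 < α) (hαα' : α < α') (ha : 0 < a)
    (P' : ℝ → ℝ)
    (hP' : ∀ x : ℝ, max 0 (-b / a) < x →
      P' x = a * α' * (a * x + b) ^ (α' - 1) - α * x ^ (α - 1)) :
    ¬ ∃ x₁ x₂ x₃ : ℝ, max 0 (-b / a) < x₁ ∧ x₁ < x₂ ∧ x₂ < x₃ ∧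
      P' x₁ < 0 ∧ P' x₂ > 0 ∧ P' x₃ < 0 := by
  rintro ⟨x₁, x₂, x₃, hx₁, h12, h23, hs1, hs2, hs3⟩
  set m : ℝ := max 0 (-b / a) with hm
  set Q : ℝ → ℝ := fun x =>
    Real.log (a * α') + (α' - 1) * Real.log (a * x + b)
      - (Real.log α + (α - 1) * Real.log x) with hQ
  -- basic positivity on the domain
  have hdom : ∀ x : ℝ, m < x → 0 < x ∧ 0 < a * x + b := by
    intro x hx
    have h0 : 0 < x := lt_of_le_of_lt (le_max_left _ _) hx
    have hb : -b / a < x := lt_of_le_of_lt (le_max_right _ _) hx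
    have : -b < a * x := by
      rw [div_lt_iff₀ ha] at hb; linarith
    exact ⟨h0, by linarith⟩
  -- sign equivalence between P' and Q
  have hsign : ∀ x : ℝ, m < x → (P' x < 0 ↔ Q x < 0) ∧ (0 < P' x ↔ 0 < Q x) := by
    intro x hx
    obtain ⟨hx0, hxb⟩ := hdom x hx
    have hα0 : (0:ℝ) < α := by linarith
    have hα'0 : (0:ℝ) < α' := by linarith
    have hA : 0 < a * α' * (a * x + b) ^ (α' - 1) := by positivity
    have hB : 0 < α * x ^ (α - 1) := by positivity
    have hQeq : Q x = Real.log (a * α' * (a * x + b) ^ (α' - 1))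
        - Real.log (α * x ^ (α - 1)) := by
      rw [Real.log_mul (by positivity) (Real.rpow_pos_of_pos hxb _).ne',
        Real.log_mul (by positivity) (Real.rpow_pos_of_pos hx0 _).ne',
        Real.log_rpow hxb, Real.log_rpow hx0]
    rw [hP' x hx, hQeq]
    constructor
    · rw [sub_neg, sub_neg, Real.log_lt_log_iff hA hB]
    · rw [sub_pos, sub_pos, Real.log_lt_log_iff hB hA]
  -- derivative of Q
  have hderiv : ∀ x : ℝ, m < x →
      HasDerivAt Q ((α' - 1) * (a / (a * x + b)) - (α - 1) * x⁻¹) x := by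
    intro x hx
    obtain ⟨hx0, hxb⟩ := hdom x hx
    have h1 : HasDerivAt (fun x : ℝ => a * x + b) a x := by
      simpa using ((hasDerivAt_id x).const_mul a).add_const b
    have h2 : HasDerivAt (fun x : ℝ => Real.log (a * x + b)) (a / (a * x + b)) x := by
      simpa [div_eq_mul_inv, mul_comm, Function.comp_def] using (Real.hasDerivAt_log hxb.ne').comp x h1
    exact ((h2.const_mul (α' - 1)).const_add (Real.log (a * α'))).sub
      (((Real.hasDerivAt_log hx0.ne').const_mul (α - 1)).const_add (Real.log α))
  set t₀ : ℝ := (α - 1) * b / (a * (α' - α)) with ht₀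
  have hcoef : 0 < a * (α' - α) := by nlinarith
  -- sign of the derivative
  have hdneg : ∀ x : ℝ, m < x → x < t₀ →
      (α' - 1) * (a / (a * x + b)) - (α - 1) * x⁻¹ < 0 := by
    intro x hx hxt
    obtain ⟨hx0, hxb⟩ := hdom x hx
    have hN : a * (α' - α) * x - (α - 1) * b < 0 := by
      rw [ht₀, lt_div_iff₀ hcoef] at hxt; nlinarith
    have : (α' - 1) * (a / (a * x + b)) - (α - 1) * x⁻¹
        = (a * (α' - α) * x - (α - 1) * b) / (x * (a * x + b)) := by
      field_simp; ring
    rw [this]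
    exact div_neg_of_neg_of_pos hN (by positivity)
  have hdpos : ∀ x : ℝ, m < x → t₀ < x →
      0 < (α' - 1) * (a / (a * x + b)) - (α - 1) * x⁻¹ := by
    intro x hx hxt
    obtain ⟨hx0, hxb⟩ := hdom x hx
    have hN : 0 < a * (α' - α) * x - (α - 1) * b := by
      rw [ht₀, div_lt_iff₀ hcoef] at hxt; nlinarith
    have : (α' - 1) * (a / (a * x + b)) - (α - 1) * x⁻¹
        = (a * (α' - α) * x - (α - 1) * b) / (x * (a * x + b)) := by
      field_simp; ring
    rw [this]
    exact div_pos hN (by positivity)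
  have hx₂ : m < x₂ := hx₁.trans h12
  have hx₃ : m < x₃ := hx₂.trans h23
  have hQ1 : Q x₁ < 0 := ((hsign x₁ hx₁).1).mp hs1
  have hQ2 : 0 < Q x₂ := ((hsign x₂ hx₂).2).mp hs2
  have hQ3 : Q x₃ < 0 := ((hsign x₃ hx₃).1).mp hs3
  rcases le_or_gt x₂ t₀ with hcase | hcase
  · -- Q strictly decreasing on [x₁, x₂]
    have hanti : StrictAntiOn Q (Icc x₁ x₂) := by
      apply strictAntiOn_of_deriv_neg (convex_Icc x₁ x₂)
      · intro x hxmem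
        exact (hderiv x (lt_of_lt_of_le hx₁ hxmem.1)).continuousAt.continuousWithinAt
      · intro x hxmem
        rw [interior_Icc] at hxmem
        have hmx : m < x := hx₁.trans hxmem.1
        rw [(hderiv x hmx).deriv]
        exact hdneg x hmx (lt_of_lt_of_le hxmem.2 hcase)
    have := hanti ⟨le_refl x₁, le_of_lt h12⟩ ⟨le_of_lt h12, le_refl x₂⟩ h12
    linarith
  · -- Q strictly increasing on [x₂, x₃]
    have hmono : StrictMonoOn Q (Icc x₂ x₃) := by
      apply strictMonoOn_of_deriv_pos (convex_Icc x₂ x₃)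
      · intro x hxmem
        exact (hderiv x (lt_of_lt_of_le hx₂ hxmem.1)).continuousAt.continuousWithinAt
      · intro x hxmem
        rw [interior_Icc] at hxmem
        have hmx : m < x := hx₂.trans hxmem.1
        rw [(hderiv x hmx).deriv]
        exact hdpos x hmx (hcase.trans hxmem.1)
    have := hmono ⟨le_refl x₂, le_of_lt h23⟩ ⟨le_of_lt h23, le_refl x₃⟩ h23
    linarith
end
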